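/- Let P be a finite set of primes with minimum element q, and suppose that for all p ∈ P, (‖p‖ + q − 2)/log_q(p) ≤ ‖q‖ + q − 1. Then for all n > 1, ‖n‖_P/log_3(n) ≤ ‖q‖/log_3(q) + (q−1)/log_3(q), equivalently ‖n‖_P/log_q(n) ≤ ‖q‖ + q − 1. -/

import Mathlib

/-!
Put `K = ‖q‖ + q - 1`. By strong induction, every `n ≥ 2` has a run of the `P`-algorithm of
cost `c` with `c · log q ≤ K · log n`. Below `q` the algorithm only subtracts ones, and
`n · log q ≤ (q + 1) · log n` there. Otherwise it subtracts `j` ones until it reaches a multiple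
`p · X` of some `p ∈ P`; minimality of `j` gives `j ≤ q - 1`, and `j ≤ q - 2` unless `q` itself
divides, so the hypothesis on `P` (or `p = q`) bounds the `‖p‖ + j` ones spent by `K · log_q p`,
while `X` is handled by induction.
-/

/-- `IsExpr n m` : the positive integer `n` is representable by an arithmetic
expression in basis `{1, +, ·}` containing exactly `m` ones. -/
inductive IsExpr : ℕ → ℕ → Prop
  | one : IsExpr 1 1
  | add {a b m n : ℕ} : IsExpr a m → IsExpr b n → IsExpr (a + b) (m + n)
  | mul {a b m n : ℕ} : IsExpr a m → IsExpr b n → IsExpr (a * b) (m + n)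

/-- Integer complexity `‖n‖`: the minimum number of 1's needed to represent `n`
using 1's, addition and multiplication. -/
noncomputable def cpx (n : ℕ) : ℕ := sInf {m | IsExpr n m}

/-- `PAlg P n c` : the `P`-algorithm, run on the positive integer `n`, builds an
expression for `n` in basis `{1, +, ·}` containing `c` ones.  The algorithm
represents `1` as `1`; represents `p ∈ P` by a shortest expression (of `cpx p`
ones); if `n ∉ P` is divisible by some `p ∈ P` it writes `n = p · (n / p)` and
recurses on `n / p`; otherwise it writes `n = 1 + (n - 1)` and recurses on `n - 1`. -/
inductive PAlg (P : Finset ℕ) : ℕ → ℕ → Prop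
  | one : PAlg P 1 1
  | base {p : ℕ} : p ∈ P → PAlg P p (cpx p)
  | div {n p c : ℕ} : 1 < n → n ∉ P → p ∈ P → p ∣ n →
      PAlg P (n / p) c → PAlg P n (cpx p + c)
  | step {n c : ℕ} : 1 < n → (∀ p ∈ P, ¬ p ∣ n) →
      PAlg P (n - 1) c → PAlg P n (c + 1)

/-- `‖n‖_P` : the number of ones in the expression built by the `P`-algorithm. -/
noncomputable def cpxP (P : Finset ℕ) (n : ℕ) : ℕ := sInf {c | PAlg P n c}

open Real

lemma IsExpr.pos {n m : ℕ} (h : IsExpr n m) : 0 < m := by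
  induction h <;> omega

lemma IsExpr.eq_one_of_eq_one {n m : ℕ} (h : IsExpr n m) (hm : m = 1) : n = 1 := by
  cases h with
  | one => rfl
  | add h₁ h₂ | mul h₁ h₂ => have := h₁.pos; have := h₂.pos; omega

lemma isExpr_self {n : ℕ} (hn : 1 ≤ n) : IsExpr n n := by
  induction n, hn using Nat.le_induction with
  | base => exact .one
  | succ k _ ih => exact .add ih .one

lemma two_le_cpx {n : ℕ} (hn : 2 ≤ n) : 2 ≤ cpx n := by
  have hmem : IsExpr n (cpx n) := Nat.sInf_mem ⟨n, isExpr_self (by omega)⟩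
  have := hmem.pos
  have : cpx n ≠ 1 := fun h => by have := hmem.eq_one_of_eq_one h; omega
  omega

lemma sq_lt_two_pow_succ (q : ℕ) : q ^ 2 < 2 ^ (q + 1) := by
  induction q with
  | zero => norm_num
  | succ k ih =>
    have := Nat.lt_two_pow_self (n := k)
    rw [pow_succ 2 (k + 1), pow_succ 2 k] at *
    nlinarith

lemma mul_log_le_add_one_mul_log {n q : ℕ} (hn : 2 ≤ n) (hnq : n ≤ q) :
    n * log q ≤ (q + 1) * log n := by
  rcases hn.eq_or_lt with rfl | hn3
  · have h : (q : ℝ) ^ 2 ≤ 2 ^ (q + 1) := by exact_mod_cast (sq_lt_two_pow_succ q).le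
    have := log_le_log (by positivity) h
    rw [log_pow, log_pow] at this
    push_cast at this ⊢
    linarith
  · have hn0 : (0 : ℝ) < n := by positivity
    have hnq' : (n : ℝ) ≤ q := by exact_mod_cast hnq
    have he : exp 1 ≤ n :=
      (exp_one_lt_d9.trans (by norm_num)).le.trans (by exact_mod_cast hn3 : (3 : ℝ) ≤ n)
    have hanti : log q / q ≤ log n / n := log_div_self_antitoneOn he (he.trans hnq') hnq'
    rw [div_le_div_iff₀ (hn0.trans_le hnq') hn0] at hanti
    nlinarith [log_natCast_nonneg n]

lemma div_logb_le_iff {b x a K : ℝ} (hb : 1 < b) (hx : 1 < x) :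
    a / logb b x ≤ K ↔ a * log b ≤ K * log x := by
  rw [div_le_iff₀ (logb_pos hb hx), logb, ← mul_div_assoc, le_div_iff₀ (log_pos hb)]

namespace PAlg

variable {P : Finset ℕ}

lemma add_of_not_dvd {m c : ℕ} (hm : 1 ≤ m) (hc : PAlg P m c) :
    ∀ j, (∀ i, m < i → i ≤ m + j → ∀ p ∈ P, ¬ p ∣ i) → PAlg P (m + j) (c + j)
  | 0, _ => hc
  | j + 1, h => .step (by omega) (h _ (by omega) le_rfl) <| by
      simpa using add_of_not_dvd hm hc j fun i hi hij => h i hi (by omega)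

lemma self_of_forall_lt {n : ℕ} (hn : 1 ≤ n) (h : ∀ p ∈ P, n < p) : PAlg P n n := by
  obtain ⟨k, rfl⟩ : ∃ k, n = 1 + k := ⟨n - 1, by omega⟩
  refine add_of_not_dvd le_rfl .one k fun i _ hi p hp hdvd => ?_
  have := Nat.le_of_dvd (by omega) hdvd
  have := h p hp
  omega

lemma prime_mul (hprime : ∀ p ∈ P, p.Prime) {p X c : ℕ} (hp : p ∈ P) (hX : 2 ≤ X)
    (hc : PAlg P X c) : PAlg P (p * X) (cpx p + c) := by
  have hp2 := (hprime p hp).two_le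
  have hpX : p * X ∉ P := fun h => Nat.not_prime_mul (by omega) (by omega) (hprime _ h)
  refine .div (by nlinarith) hpX hp (dvd_mul_right p X) ?_
  rwa [Nat.mul_div_cancel_left X (by omega)]

end PAlg

lemma exists_last_dvd {P : Finset ℕ} {q : ℕ} (hq : q ∈ P) (hq0 : 0 < q) (n : ℕ) :
    ∃ m j p, m + j = n ∧ p ∈ P ∧ p ∣ m ∧ (j + 2 ≤ q ∨ p = q ∧ j + 1 ≤ q) ∧
      ∀ i, m < i → i ≤ n → ∀ p ∈ P, ¬ p ∣ i := by
  classical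
  have hex : ∃ j, ∃ p ∈ P, p ∣ n - j := ⟨n % q, q, hq, Nat.dvd_sub_mod n⟩
  obtain ⟨p, hp, hpd⟩ := Nat.find_spec hex
  have hjle : Nat.find hex ≤ n % q := Nat.find_min' hex ⟨q, hq, Nat.dvd_sub_mod n⟩
  have hmod := Nat.mod_lt n hq0
  have := Nat.mod_le n q
  have hfree : ∀ i, n - Nat.find hex < i → i ≤ n → ∀ p ∈ P, ¬ p ∣ i := by
    intro i hi hin p hp hdvd
    refine Nat.find_min hex (m := n - i) (by omega) ⟨p, hp, ?_⟩
    rwa [Nat.sub_sub_self hin]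
  refine ⟨n - Nat.find hex, Nat.find hex, ?_⟩
  by_cases hj : Nat.find hex + 2 ≤ q
  · exact ⟨p, by omega, hp, hpd, .inl hj, hfree⟩
  · refine ⟨q, by omega, hq, ?_, .inr ⟨rfl, by omega⟩, hfree⟩
    rw [show Nat.find hex = n % q by omega]
    exact Nat.dvd_sub_mod n

section Bound

variable {P : Finset ℕ} {q : ℕ}
  (hcond : ∀ p ∈ P, ((cpx p : ℝ) + q - 2) * log q ≤ ((cpx q : ℝ) + q - 1) * log p)
include hcond

lemma cpx_add_mul_log_le {p j : ℕ} (hp : p ∈ P) (hj : j + 2 ≤ q ∨ p = q ∧ j + 1 ≤ q) :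
    ((cpx p : ℝ) + j) * log q ≤ ((cpx q : ℝ) + q - 1) * log p := by
  have hlogq := log_natCast_nonneg q
  rcases hj with hj | ⟨rfl, hj⟩
  · have hj' : (j : ℝ) + 2 ≤ q := by exact_mod_cast hj
    nlinarith [hcond p hp]
  · have hj' : (j : ℝ) + 1 ≤ p := by exact_mod_cast hj
    nlinarith

theorem exists_palg_mul_log_le (hprime : ∀ p ∈ P, p.Prime) (hq : q ∈ P)
    (hqmin : ∀ p ∈ P, q ≤ p) (n : ℕ) (hn : 2 ≤ n) :
    ∃ c, PAlg P n c ∧ (c : ℝ) * log q ≤ ((cpx q : ℝ) + q - 1) * log n := by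
  induction n using Nat.strong_induction_on with
  | _ n ih =>
  have hq2 := (hprime q hq).two_le
  set K : ℝ := (cpx q : ℝ) + q - 1
  have hK : (q : ℝ) + 1 ≤ K := by
    have : (2 : ℝ) ≤ cpx q := by exact_mod_cast two_le_cpx hq2
    linarith
  rcases lt_or_ge n q with hnq | hqn
  · refine ⟨n, PAlg.self_of_forall_lt (by omega) fun p hp => hnq.trans_le (hqmin p hp), ?_⟩
    calc (n : ℝ) * log q ≤ (q + 1) * log n := mul_log_le_add_one_mul_log hn hnq.le
      _ ≤ K * log n := mul_le_mul_of_nonneg_right hK (log_natCast_nonneg n)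
  obtain ⟨m, j, p, rfl, hp, ⟨X, rfl⟩, hj, hfree⟩ := exists_last_dvd hq (by omega) n
  have hcost := cpx_add_mul_log_le hcond hp hj
  have hp2 := (hprime p hp).two_le
  have hX : X ≠ 0 := by rintro rfl; omega
  have hK0 : 0 ≤ K := by linarith [(q.cast_nonneg : (0 : ℝ) ≤ q)]
  have hlog : K * log (p * X : ℕ) ≤ K * log (p * X + j : ℕ) := by gcongr; omega
  rcases (Nat.one_le_iff_ne_zero.2 hX).eq_or_lt with rfl | hX2
  · rw [mul_one] at hfree hlog ⊢
    exact ⟨cpx p + j, PAlg.add_of_not_dvd (by omega) (.base hp) j hfree,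
      by exact_mod_cast hcost.trans hlog⟩
  obtain ⟨c, hc, hcX⟩ := ih X (by nlinarith) hX2
  refine ⟨cpx p + c + j, PAlg.add_of_not_dvd (by nlinarith)
    (PAlg.prime_mul hprime hp hX2 hc) j hfree, ?_⟩
  have hsplit : log (p * X : ℕ) = log p + log X := by
    push_cast
    exact log_mul (by positivity) (by positivity)
  calc ((cpx p + c + j : ℕ) : ℝ) * log q = (cpx p + j) * log q + c * log q := by push_cast; ring
    _ ≤ K * log p + K * log X := add_le_add hcost hcX
    _ = K * log (p * X : ℕ) := by rw [hsplit]; ring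
    _ ≤ K * log (p * X + j : ℕ) := hlog

end Bound

theorem stmt17_general (P : Finset ℕ) (hprime : ∀ p ∈ P, p.Prime)
    (q : ℕ) (hq : q ∈ P) (hqmin : ∀ p ∈ P, q ≤ p)
    (hcond : ∀ p ∈ P, ((cpx p : ℝ) + q - 2) / Real.logb q p ≤ (cpx q : ℝ) + q - 1) :
    ∀ n : ℕ, 1 < n →
      (cpxP P n : ℝ) / Real.logb 3 n ≤
          (cpx q : ℝ) / Real.logb 3 q + ((q : ℝ) - 1) / Real.logb 3 q ∧
        (cpxP P n : ℝ) / Real.logb q n ≤ (cpx q : ℝ) + q - 1 := by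
  have hq1 : (1 : ℝ) < q := by exact_mod_cast (hprime q hq).one_lt
  have hcond' : ∀ p ∈ P, ((cpx p : ℝ) + q - 2) * log q ≤ ((cpx q : ℝ) + q - 1) * log p :=
    fun p hp => (div_logb_le_iff hq1 (by exact_mod_cast (hprime p hp).one_lt)).1 (hcond p hp)
  intro n hn
  have hn1 : (1 : ℝ) < n := by exact_mod_cast hn
  obtain ⟨c, hc, hbound⟩ := exists_palg_mul_log_le hcond' hprime hq hqmin n hn
  have hcpxP : (cpxP P n : ℝ) ≤ c := by exact_mod_cast Nat.sInf_le hc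
  have hbound_q : (cpxP P n : ℝ) / logb q n ≤ (cpx q : ℝ) + q - 1 :=
    (div_logb_le_iff hq1 hn1).2 <|
      (mul_le_mul_of_nonneg_right hcpxP (log_natCast_nonneg q)).trans hbound
  refine ⟨?_, hbound_q⟩
  rw [← add_div, ← mul_logb (b := q) (by positivity) hq1.ne' (by linarith), mul_comm, ← div_div]
  have hlogb : 0 < logb 3 q := logb_pos (by norm_num) hq1
  calc (cpxP P n : ℝ) / logb q n / logb 3 q ≤ ((cpx q : ℝ) + q - 1) / logb 3 q := by gcongr
    _ = _ := by ring

/-- if `q` is the minimum of `P` and for every `p ∈ P`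
`(‖p‖ + q − 2)/log_q p ≤ ‖q‖ + q − 1`, then for all `n > 1`,
`‖n‖_P/log₃ n ≤ ‖q‖/log₃ q + (q−1)/log₃ q`, equivalently
`‖n‖_P/log_q n ≤ ‖q‖ + q − 1`. -/
theorem stmt17 (P : Finset ℕ) (hP : P.Nonempty) (hprime : ∀ p ∈ P, p.Prime)
    (q : ℕ) (hq : q ∈ P) (hqmin : ∀ p ∈ P, q ≤ p)
    (hcond : ∀ p ∈ P, ((cpx p : ℝ) + q - 2) / Real.logb q p ≤ (cpx q : ℝ) + q - 1) :
    ∀ n : ℕ, 1 < n →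
      (cpxP P n : ℝ) / Real.logb 3 n ≤
          (cpx q : ℝ) / Real.logb 3 q + ((q : ℝ) - 1) / Real.logb 3 q ∧
        (cpxP P n : ℝ) / Real.logb q n ≤ (cpx q : ℝ) + q - 1 :=
  stmt17_general P hprime q hq hqmin hcond
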